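/- arXiv:2506.03384 — 3 statements merged into one kernel-verified Lean document; each statement's English description precedes it below -/
import Mathlib

section
/- Let λ be a complex number with positive real part a > 0, let τ ≥ 0, μ > 0, and let Φ₁, Φ₂ be positive reals with Φ₁ < Φ₂. Then the characteristic equation λ = (Φ₁ e^{−λτ} − Φ₂) μ has no solution; i.e., all roots of this equation have nonpositive real part. -/
/-! Rewrite the equation as `λ + Φ₂ μ = Φ₁ μ e^{−λτ}`. Since `Re λ > 0`, the left side has modulus
greater than `Φ₂ μ`, while `|e^{−λτ}| = e^{−τ Re λ} ≤ 1` bounds the right side by `Φ₁ μ < Φ₂ μ`. -/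

namespace Complex

lemma lt_norm_add_ofReal {z : ℂ} (hz : 0 < z.re) (c : ℝ) : c < ‖z + c‖ :=
  calc c < (z + c).re := by simpa using hz
    _ ≤ ‖z + c‖ := re_le_norm _

lemma norm_exp_neg_mul_ofReal_le_one {z : ℂ} (hz : 0 ≤ z.re) {t : ℝ} (ht : 0 ≤ t) :
    ‖exp (-z * t)‖ ≤ 1 := by
  rw [norm_exp, Real.exp_le_one_iff]
  simpa using mul_nonneg hz ht

end Complex

theorem stmt_4_general (lam : ℂ) (hre : 0 < lam.re) (τ μ Φ₁ Φ₂ : ℝ)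
    (hτ : 0 ≤ τ) (hμ : 0 < μ) (hΦ₁ : 0 < Φ₁) (hlt : Φ₁ < Φ₂) :
    lam ≠ ((Φ₁ : ℂ) * Complex.exp (-lam * (τ : ℂ)) - (Φ₂ : ℂ)) * (μ : ℂ) := by
  intro heq
  have hroot : lam + ↑(Φ₂ * μ) = ↑(Φ₁ * μ) * Complex.exp (-lam * τ) := by
    push_cast
    linear_combination heq
  have hlower : Φ₂ * μ < ‖lam + ↑(Φ₂ * μ)‖ := Complex.lt_norm_add_ofReal hre _
  have hupper : ‖↑(Φ₁ * μ) * Complex.exp (-lam * τ)‖ ≤ Φ₁ * μ := by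
    rw [norm_mul, Complex.norm_real, Real.norm_of_nonneg (by positivity)]
    exact mul_le_of_le_one_right (by positivity)
      (Complex.norm_exp_neg_mul_ofReal_le_one hre.le hτ)
  rw [hroot] at hlower
  linarith [mul_lt_mul_of_pos_right hlt hμ]

/-- The delayed characteristic equation `λ = (Φ₁ e^{−λτ} − Φ₂) μ` has no root with
positive real part when `0 < Φ₁ < Φ₂`, `μ > 0`, `τ ≥ 0`. -/
theorem stmt_4 (lam : ℂ) (hre : 0 < lam.re) (τ μ Φ₁ Φ₂ : ℝ)
    (hτ : 0 ≤ τ) (hμ : 0 < μ) (hΦ₁ : 0 < Φ₁) (hΦ₂ : 0 < Φ₂) (hlt : Φ₁ < Φ₂) :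
    lam ≠ ((Φ₁ : ℂ) * Complex.exp (-lam * (τ : ℂ)) - (Φ₂ : ℂ)) * (μ : ℂ) :=
  stmt_4_general lam hre τ μ Φ₁ Φ₂ hτ hμ hΦ₁ hlt
end

section
/- Suppose β₁ > β₂ > 0, p ∈ (0,1], and Θ = (γ₁ Y₂ N^{β₂})/(γ₂ Y₁ N^{β₁}) ≥ 1 where all constants γ₁, γ₂, Y₁, Y₂, N are positive. Then γ₁ p^{1−β₁}/(Y₁ N^{β₁}) ≥ γ₂ p^{1−β₂}/(Y₂ N^{β₂}), with strict inequality when p < 1 or Θ > 1, and hence the selection gradient S'(α) = ln(1 + γ₁ p^{1−β₁}/(Y₁ N^{β₁})) − ln(1 + γ₂ p^{1−β₂}/(Y₂ N^{β₂})) is nonnegative, and strictly positive when p < 1 or Θ > 1. -/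
/-- If `Θ = (γ₁ Y₂ N^{β₂})/(γ₂ Y₁ N^{β₁}) ≥ 1` and `β₁ > β₂`, then for `p ∈ (0,1]`
the resource-1 ratio exceeds the resource-2 ratio, so the selection gradient
`S'(α) = ln(1+A) − ln(1+B)` is positive (strictly when `p < 1` or `Θ > 1`;
nonnegative when `p = 1` and `Θ = 1`). -/
theorem stmt_6 (β₁ β₂ γ₁ γ₂ Y₁ Y₂ N p : ℝ)
    (hβ : β₂ < β₁) (hβ₂ : 0 < β₂) (hp : 0 < p) (hp1 : p ≤ 1)
    (hγ₁ : 0 < γ₁) (hγ₂ : 0 < γ₂) (hY₁ : 0 < Y₁) (hY₂ : 0 < Y₂) (hN : 0 < N)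
    (Θ : ℝ) (hΘdef : Θ = γ₁ * Y₂ * N ^ β₂ / (γ₂ * Y₁ * N ^ β₁)) (hΘ : 1 ≤ Θ)
    (A B : ℝ) (hA : A = γ₁ * p ^ (1 - β₁) / (Y₁ * N ^ β₁))
    (hB : B = γ₂ * p ^ (1 - β₂) / (Y₂ * N ^ β₂)) :
    ((p < 1 ∨ 1 < Θ) → B < A ∧ 0 < Real.log (1 + A) - Real.log (1 + B)) ∧
      ((p = 1 ∧ Θ = 1) → B ≤ A ∧ 0 ≤ Real.log (1 + A) - Real.log (1 + B)) := by
  have hN1 : (0:ℝ) < N ^ β₁ := Real.rpow_pos_of_pos hN _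
  have hN2 : (0:ℝ) < N ^ β₂ := Real.rpow_pos_of_pos hN _
  have hBpos : 0 < B := by
    rw [hB]; positivity
  have hpe : p ^ (1 - β₂) * p ^ (β₂ - β₁) = p ^ (1 - β₁) := by
    rw [← Real.rpow_add hp]; ring_nf
  have hAB : A = Θ * p ^ (β₂ - β₁) * B := by
    rw [hA, hB, hΘdef, ← hpe]
    field_simp
  have hq1 : 1 ≤ p ^ (β₂ - β₁) :=
    Real.one_le_rpow_of_pos_of_le_one_of_nonpos hp hp1 (by linarith)
  constructor
  · rintro (h | h)
    · have hq : 1 < p ^ (β₂ - β₁) :=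
        Real.one_lt_rpow_of_pos_of_lt_one_of_neg hp h (by linarith)
      have h1 : 1 < Θ * p ^ (β₂ - β₁) := by nlinarith
      have hBA : B < A := by
        rw [hAB]; nlinarith
      refine ⟨hBA, ?_⟩
      have := Real.log_lt_log (by linarith) (show 1 + B < 1 + A by linarith)
      linarith
    · have h1 : 1 < Θ * p ^ (β₂ - β₁) := by nlinarith
      have hBA : B < A := by
        rw [hAB]; nlinarith
      refine ⟨hBA, ?_⟩
      have := Real.log_lt_log (by linarith) (show 1 + B < 1 + A by linarith)
      linarith
  · rintro ⟨hp', hΘ'⟩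
    have hq : p ^ (β₂ - β₁) = 1 := by rw [hp', Real.one_rpow]
    have hBA : B ≤ A := by rw [hAB, hΘ', hq]; linarith
    refine ⟨hBA, ?_⟩
    have := Real.log_le_log (by linarith : (0:ℝ) < 1 + B) (by linarith : 1 + B ≤ 1 + A)
    linarith
end

section
/- If f : ℝ → ℝ is differentiable at p̄ ∈ (0,1) and U_i = f(p_i) for each i, then at the symmetric point p_i = p̄ for all i, the Jacobian of the replicator vector field F_i(p) = p_i Σ_{j≠i} p_j r_{ij}(f(p_i) − f(p_j)) equals p̄² f'(p̄) · M, where M is the graph Laplacian matrix with M_{ii} = Σ_{j≠i} r_{ij} and M_{ij} = −r_{ij}. -/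
/-!
Perturbing a single coordinate `p_k = t` of the symmetric point leaves every factor
`f (p_i) - f (p_j)` with `i, j ≠ k` equal to `0`, so each entry of `F` is a constant multiple
of `t (f t - f p̄)`. Its derivative at `t = p̄` is `p̄ f'(p̄)`, because the term carrying
`f p̄ - f p̄` vanishes.
-/

open Finset Function

theorem HasDerivAt.id_mul_sub_apply_self {f : ℝ → ℝ} {f' c : ℝ} (hf : HasDerivAt f f' c) :
    HasDerivAt (fun t => t * (f t - f c)) (c * f') c :=
  ((hasDerivAt_id' c).mul (hf.sub_const (f c))).congr_deriv (by simp)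

namespace Replicator

variable {ι : Type*} [Fintype ι] [DecidableEq ι]

def field (r : ι → ι → ℝ) (f : ℝ → ℝ) (p : ι → ℝ) (i : ι) : ℝ :=
  p i * ∑ j ∈ univ.filter (· ≠ i), p j * r i j * (f (p i) - f (p j))

variable (r : ι → ι → ℝ) (f : ℝ → ℝ) (c t : ℝ)

theorem field_update_self (k : ι) :
    field r f (update (fun _ => c) k t) k = c * (∑ j ∈ univ.filter (· ≠ k), r k j) *
      (t * (f t - f c)) := by
  rw [field, update_self, mul_sum, mul_sum, sum_mul]
  refine sum_congr rfl fun j hj => ?_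
  rw [update_of_ne (mem_filter.mp hj).2]
  ring

theorem field_update_of_ne {i k : ι} (hik : i ≠ k) :
    field r f (update (fun _ => c) k t) i = -(c * r i k) * (t * (f t - f c)) := by
  rw [field, update_of_ne hik, sum_eq_single_of_mem k (by simp [hik.symm]), update_self]
  · ring
  · intro j _ hjk
    rw [update_of_ne hjk, sub_self, mul_zero]

variable {r f c} {f' : ℝ}

theorem hasDerivAt_field_update_self (hf : HasDerivAt f f' c) (k : ι) :
    HasDerivAt (fun t => field r f (update (fun _ => c) k t) k)
      (c ^ 2 * f' * ∑ j ∈ univ.filter (· ≠ k), r k j) c := by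
  simp only [field_update_self]
  exact (hf.id_mul_sub_apply_self.const_mul _).congr_deriv (by ring)

theorem hasDerivAt_field_update_of_ne (hf : HasDerivAt f f' c) {i k : ι} (hik : i ≠ k) :
    HasDerivAt (fun t => field r f (update (fun _ => c) k t) i) (c ^ 2 * f' * -r i k) c := by
  simp only [field_update_of_ne r f c _ hik]
  exact (hf.id_mul_sub_apply_self.const_mul _).congr_deriv (by ring)

end Replicator

open Finset in
theorem stmt_14_general (n : ℕ) (r : Fin n → Fin n → ℝ)
    (f : ℝ → ℝ) (f' : ℝ) (pbar : ℝ)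
    (hf : HasDerivAt f f' pbar)
    (F : (Fin n → ℝ) → Fin n → ℝ)
    (hF : ∀ p i, F p i =
      p i * ∑ j ∈ Finset.univ.filter (· ≠ i), p j * r i j * (f (p i) - f (p j)))
    (M : Matrix (Fin n) (Fin n) ℝ)
    (hMdiag : ∀ i, M i i = ∑ j ∈ Finset.univ.filter (· ≠ i), r i j)
    (hMoff : ∀ i j, i ≠ j → M i j = -(r i j)) :
    ∀ i k : Fin n,
      HasDerivAt (fun t => F (Function.update (fun _ => pbar) k t) i)
        (pbar ^ 2 * f' * M i k) pbar := by
  obtain rfl : F = Replicator.field r f := funext fun p => funext (hF p)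
  intro i k
  rcases eq_or_ne i k with rfl | hik
  · rw [hMdiag]
    exact Replicator.hasDerivAt_field_update_self hf i
  · rw [hMoff i k hik]
    exact Replicator.hasDerivAt_field_update_of_ne hf hik

open Finset in
/-- At the symmetric point `p_i = p̄`, the Jacobian of the replicator vector field
`F_i(p) = p_i ∑_{j≠i} p_j r_{ij}(f(p_i) − f(p_j))` equals `p̄² f'(p̄) · M`,
where `M` is the weighted graph Laplacian. -/
theorem stmt_14 (n : ℕ) (hn : 2 ≤ n) (r : Fin n → Fin n → ℝ)
    (hsym : ∀ i j, r i j = r j i) (hpos : ∀ i j, i ≠ j → 0 < r i j)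
    (f : ℝ → ℝ) (f' : ℝ) (pbar : ℝ)
    (hf : HasDerivAt f f' pbar)
    (F : (Fin n → ℝ) → Fin n → ℝ)
    (hF : ∀ p i, F p i =
      p i * ∑ j ∈ Finset.univ.filter (· ≠ i), p j * r i j * (f (p i) - f (p j)))
    (M : Matrix (Fin n) (Fin n) ℝ)
    (hMdiag : ∀ i, M i i = ∑ j ∈ Finset.univ.filter (· ≠ i), r i j)
    (hMoff : ∀ i j, i ≠ j → M i j = -(r i j)) :
    ∀ i k : Fin n,
      HasDerivAt (fun t => F (Function.update (fun _ => pbar) k t) i)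
        (pbar ^ 2 * f' * M i k) pbar :=
  stmt_14_general n r f f' pbar hf F hF M hMdiag hMoff
end
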